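/- arXiv:1303.5464 — 2 statements merged into one kernel-verified Lean document; each statement's English description precedes it below -/
import Mathlib

section
/- For any positive integer b, real c, and w ≠ 0, z ≠ 0, the regularized Φ̃₃ function can be reduced to first-parameter one via Φ̃₃(b,c;w,z) = (z/w)^{b−1} Σ_{i=0}^{2(b−1)} z^{−i} · A_i(b,c;z) · Φ̃₃(1,c−i;w,z), where A_i(b,c;z) = ((−1)^{b−1}/(b−1)!) Σ_{k=0}^{⌊i/2⌋} (−1)^k (b−i+k)_{i−k} (c−i−1+k)_{i−2k} z^k / ((i−2k)! k!). -/
open scoped BigOperators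
open MeasureTheory

/-- Term of the double series defining the regularized Φ̃₃ function. -/
noncomputable def phi3Term (b c w z : ℝ) (k m : ℕ) : ℝ :=
  Polynomial.eval b (ascPochhammer ℝ k) * (Real.Gamma (c + k + m))⁻¹ *
    w ^ k * z ^ m / (Nat.factorial k * Nat.factorial m)

/-- The regularized confluent hypergeometric function of two variables Φ̃₃. -/
noncomputable def Phi3 (b c w z : ℝ) : ℝ :=
  ∑' k : ℕ, ∑' m : ℕ, phi3Term b c w z k m

/-- Modified Bessel function of the first kind of integer order (I₋ₙ = Iₙ). -/
noncomputable def besselI (n : ℤ) (x : ℝ) : ℝ :=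
  ∑' m : ℕ, (x / 2) ^ (2 * m + n.natAbs) /
    (Nat.factorial m * Nat.factorial (m + n.natAbs))

/-- Modified Bessel function of the first kind of real order. -/
noncomputable def besselIR (ν x : ℝ) : ℝ :=
  ∑' m : ℕ, (x / 2) ^ ((2 * m : ℝ) + ν) * (Real.Gamma ((m : ℝ) + ν + 1))⁻¹ /
    Nat.factorial m

/-- Generalized Marcum-Q function of integer order. -/
noncomputable def marcumQ (m : ℤ) (a b : ℝ) : ℝ :=
  ∫ x in Set.Ioi b,
    x ^ m / a ^ (m - 1) * Real.exp (-(a ^ 2 + x ^ 2) / 2) * besselI (m - 1) (a * x)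

/-- Generalized Marcum-Q function of real order. -/
noncomputable def marcumQR (m a b : ℝ) : ℝ :=
  ∫ x in Set.Ioi b,
    x ^ m / a ^ (m - 1) * Real.exp (-(a ^ 2 + x ^ 2) / 2) * besselIR (m - 1) (a * x)

/-- The polynomials A_i(b,c;z) in the Φ̃₃ reduction formula. -/
noncomputable def Acoef (b : ℕ) (c z : ℝ) (i : ℕ) : ℝ :=
  ((-1 : ℝ) ^ (b - 1) / Nat.factorial (b - 1)) *
    ∑ k ∈ Finset.range (i / 2 + 1),
      (-1 : ℝ) ^ k * Polynomial.eval ((b : ℝ) - i + k) (ascPochhammer ℝ (i - k)) *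
        Polynomial.eval (c - i - 1 + k) (ascPochhammer ℝ (i - 2 * k)) * z ^ k /
        (Nat.factorial (i - 2 * k) * Nat.factorial k)

/-! The series satisfies the contiguous relation
`Φ̃₃(b,c) = c Φ̃₃(b,c+1) + b w Φ̃₃(b+1,c+2) + z Φ̃₃(b,c+2)`, obtained termwise from
`1/Γ(x) = x/Γ(x+1)` and index shifts in `k` and `m`. Read as a recurrence that raises `b` by
one, it turns the claim into an induction on `b`, provided the coefficients satisfy
`b A_i(b+1,c) = z A_{i-2}(b,c-2) - (c-2) A_{i-1}(b,c-1) - A_i(b,c)`.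
This holds summand by summand because of the Pochhammer difference rule
`(y+1)_{n+1} - (y)_{n+1} = (n+1) (y+1)_n`. Since `A_i(b,·)` vanishes for `i ≥ 2b-1`, the ranges of
summation can be enlarged freely. -/

open Polynomial

section Pochhammer

variable {R : Type*} [CommRing R]

theorem ascPochhammer_eval_add_one_sub (n : ℕ) (y : R) :
    (ascPochhammer R (n + 1)).eval (y + 1) - (ascPochhammer R (n + 1)).eval y =
      (n + 1) * (ascPochhammer R n).eval (y + 1) := by
  have h := congrArg (eval y) (ascPochhammer_succ_comp_X_add_one R n)
  simp only [eval_comp, eval_add, eval_mul, nsmul_eq_mul, eval_natCast, eval_X, eval_one] at h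
  push_cast at h
  linear_combination h

theorem ascPochhammer_succ_eval_sub_one (n : ℕ) (x : R) :
    (ascPochhammer R (n + 1)).eval (x - 1) = (x - 1) * (ascPochhammer R n).eval x := by
  simp [ascPochhammer_succ_left, eval_comp]

theorem ascPochhammer_eval_add_one_sub_mul_eval (y x : R) (k p : ℕ) :
    ((ascPochhammer R (k + p + 2)).eval (y + 1) - (ascPochhammer R (k + p + 2)).eval y) *
        (ascPochhammer R (p + 1)).eval x =
      (k + 1) * (ascPochhammer R (k + p + 1)).eval (y + 1) *
          (ascPochhammer R (p + 1)).eval (x - 1) +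
        (x + k + p + 1) * (p + 1) * (ascPochhammer R (k + p + 1)).eval (y + 1) *
          (ascPochhammer R p).eval x := by
  rw [ascPochhammer_eval_add_one_sub, ascPochhammer_succ_eval_sub_one,
    ascPochhammer_succ_eval p x]
  push_cast
  ring

end Pochhammer

theorem abs_ascPochhammer_eval_le (x : ℝ) (k : ℕ) :
    |(ascPochhammer ℝ k).eval x| ≤ (|x| + 1) ^ k * k.factorial := by
  induction k with
  | zero => simp
  | succ k ih =>
    have hx : |x + k| ≤ (|x| + 1) * (k + 1) := by
      refine (abs_add_le _ _).trans ?_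
      rw [Nat.abs_cast]
      nlinarith [abs_nonneg x, (Nat.cast_nonneg k : (0 : ℝ) ≤ k)]
    calc |(ascPochhammer ℝ (k + 1)).eval x| = |(ascPochhammer ℝ k).eval x| * |x + k| := by
          rw [ascPochhammer_succ_eval, abs_mul]
      _ ≤ (|x| + 1) ^ k * k.factorial * ((|x| + 1) * (k + 1)) := by gcongr
      _ = (|x| + 1) ^ (k + 1) * (k + 1).factorial := by
          push_cast [Nat.factorial_succ]
          ring

namespace Real

theorem inv_Gamma_eq_mul_inv_Gamma_add_one (x : ℝ) : (Gamma x)⁻¹ = x * (Gamma (x + 1))⁻¹ := by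
  rcases eq_or_ne x 0 with rfl | hx
  · simp [Gamma_zero]
  · rw [Gamma_add_one hx, mul_inv, ← mul_assoc, mul_inv_cancel₀ hx, one_mul]

theorem Gamma_mul_pow_le_Gamma_add_natCast {x M : ℝ} (hM : 0 < M) (hMx : M ≤ x) (d : ℕ) :
    Gamma x * M ^ d ≤ Gamma (x + d) := by
  induction d with
  | zero => simp
  | succ d ih =>
    have hMxd : M ≤ x + d := by linarith [(Nat.cast_nonneg d : (0 : ℝ) ≤ d)]
    have hxd : 0 < x + d := hM.trans_le hMxd
    calc Gamma x * M ^ (d + 1) = Gamma x * M ^ d * M := by ring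
      _ ≤ Gamma (x + d) * (x + d) := mul_le_mul ih hMxd hM.le (Gamma_pos_of_pos hxd).le
      _ = Gamma (x + (d + 1 : ℕ)) := by
          rw [Nat.cast_succ, ← add_assoc, Gamma_add_one hxd.ne', mul_comm]

theorem exists_abs_inv_Gamma_add_natCast_le (c : ℝ) {R : ℝ} (hR : 0 < R) :
    ∃ C : ℝ, ∃ N : ℕ, ∀ n ≥ N, |(Gamma (c + n))⁻¹| ≤ C / R ^ n := by
  obtain ⟨N, hN⟩ := exists_nat_ge (R - c)
  have hΓN : 0 < Gamma (c + N) := Gamma_pos_of_pos (by linarith)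
  refine ⟨R ^ N / Gamma (c + N), N, fun n hn => ?_⟩
  obtain ⟨d, rfl⟩ := Nat.exists_eq_add_of_le hn
  have hlow := Gamma_mul_pow_le_Gamma_add_natCast hR (by linarith) d (x := c + N)
  have hΓ : 0 < Gamma (c + N + d) :=
    Gamma_pos_of_pos (by linarith [(Nat.cast_nonneg d : (0 : ℝ) ≤ d)])
  rw [Nat.cast_add, ← add_assoc, abs_inv, abs_of_pos hΓ, pow_add, div_mul_eq_div_div,
    div_div_cancel_left' (by positivity), div_eq_mul_inv, ← mul_inv]
  exact inv_anti₀ (by positivity) hlow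

end Real

section Series

theorem summable_phi3Term (b c w z : ℝ) :
    Summable (fun p : ℕ × ℕ => phi3Term b c w z p.1 p.2) := by
  set R := 2 * ((|b| + 1) * |w| + |z|) + 1
  have hR : 0 < R := by positivity
  set ρ := (|b| + 1) * |w| / R
  set σ := |z| / R
  have hρ : ρ < 1 := (div_lt_one hR).2 (by linarith [abs_nonneg z, abs_nonneg w, abs_nonneg b])
  have hσ : σ < 1 := (div_lt_one hR).2 (by nlinarith [abs_nonneg z, abs_nonneg w, abs_nonneg b])
  obtain ⟨C, N, hC⟩ := Real.exists_abs_inv_Gamma_add_natCast_le c hR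
  have hC0 : 0 ≤ C := by
    have h := (abs_nonneg _).trans (hC N le_rfl)
    rwa [le_div_iff₀ (by positivity), zero_mul] at h
  have hgeom : Summable (fun p : ℕ × ℕ => C * (ρ ^ p.1 * σ ^ p.2)) :=
    ((summable_geometric_of_lt_one (by positivity) hρ).mul_of_nonneg
      (summable_geometric_of_lt_one (by positivity) hσ) (fun _ => by positivity)
      (fun _ => by positivity)).mul_left C
  refine Summable.of_norm_bounded_eventually hgeom ?_
  have hfin : {p : ℕ × ℕ | p.1 + p.2 < N}.Finite :=
    ((Set.finite_Iio N).prod (Set.finite_Iio N)).subset fun p (hp : p.1 + p.2 < N) =>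
      ⟨show p.1 < N by omega, show p.2 < N by omega⟩
  filter_upwards [hfin.compl_mem_cofinite] with ⟨k, m⟩ hkm
  have hΓ := hC (k + m) (not_lt.1 hkm)
  push_cast at hΓ
  have hm : (1 : ℝ) ≤ m.factorial := by exact_mod_cast m.factorial_pos
  calc ‖phi3Term b c w z k m‖
      = |(ascPochhammer ℝ k).eval b| * |(Real.Gamma (c + k + m))⁻¹| * |w| ^ k * |z| ^ m /
          (k.factorial * m.factorial) := by
        simp [phi3Term]
    _ ≤ (|b| + 1) ^ k * k.factorial * (C / R ^ (k + m)) * |w| ^ k * |z| ^ m /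
          (k.factorial * m.factorial) := by
        rw [← add_assoc] at hΓ
        gcongr
        exact abs_ascPochhammer_eval_le b k
    _ = C * (ρ ^ k * σ ^ m) / m.factorial := by
        simp only [ρ, σ, div_pow, mul_pow, pow_add]
        field_simp
    _ ≤ C * (ρ ^ k * σ ^ m) := div_le_self (by positivity) hm

theorem hasSum_phi3Term (b c w z : ℝ) :
    HasSum (fun p : ℕ × ℕ => phi3Term b c w z p.1 p.2) (Phi3 b c w z) := by
  have h := summable_phi3Term b c w z
  simpa only [Phi3, h.tsum_prod] using h.hasSum

theorem phi3Term_eq_mul (b c w z : ℝ) (k m : ℕ) :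
    phi3Term b c w z k m = (c + k + m) * phi3Term b (c + 1) w z k m := by
  simp only [phi3Term, Real.inv_Gamma_eq_mul_inv_Gamma_add_one (c + k + m),
    show c + 1 + k + m = c + k + m + 1 by ring]
  ring

theorem phi3Term_succ_left (b c w z : ℝ) (k m : ℕ) :
    (k + 1) * phi3Term b c w z (k + 1) m = b * w * phi3Term (b + 1) (c + 1) w z k m := by
  simp only [phi3Term, ascPochhammer_succ_left, eval_mul, eval_X, eval_comp, eval_add, eval_one,
    Nat.factorial_succ, show c + ((k + 1 : ℕ) : ℝ) + m = c + 1 + k + m by push_cast; ring]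
  push_cast
  field_simp
  ring

theorem phi3Term_succ_right (b c w z : ℝ) (k m : ℕ) :
    (m + 1) * phi3Term b c w z k (m + 1) = z * phi3Term b (c + 1) w z k m := by
  simp only [phi3Term, Nat.factorial_succ,
    show c + k + ((m + 1 : ℕ) : ℝ) = c + 1 + k + m by push_cast; ring]
  push_cast
  field_simp
  ring

theorem hasSum_fst_mul_phi3Term (b c w z : ℝ) :
    HasSum (fun p : ℕ × ℕ => p.1 * phi3Term b c w z p.1 p.2)
      (b * w * Phi3 (b + 1) (c + 1) w z) := by
  rw [← (Nat.succ_injective.prodMap Function.injective_id).hasSum_iff]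
  · refine ((hasSum_phi3Term (b + 1) (c + 1) w z).mul_left (b * w)).congr_fun fun p => ?_
    simpa using phi3Term_succ_left b c w z p.1 p.2
  · rintro ⟨_ | k, m⟩ hp
    · simp
    · exact absurd ⟨(k, m), rfl⟩ hp

theorem hasSum_snd_mul_phi3Term (b c w z : ℝ) :
    HasSum (fun p : ℕ × ℕ => p.2 * phi3Term b c w z p.1 p.2) (z * Phi3 b (c + 1) w z) := by
  rw [← (Function.injective_id.prodMap Nat.succ_injective).hasSum_iff]
  · refine ((hasSum_phi3Term b (c + 1) w z).mul_left z).congr_fun fun p => ?_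
    simpa using phi3Term_succ_right b c w z p.1 p.2
  · rintro ⟨k, _ | m⟩ hp
    · simp
    · exact absurd ⟨(k, m), rfl⟩ hp

theorem Phi3_contiguous (b c w z : ℝ) :
    Phi3 b c w z = c * Phi3 b (c + 1) w z + b * w * Phi3 (b + 1) (c + 2) w z +
      z * Phi3 b (c + 2) w z := by
  have h := ((hasSum_phi3Term b (c + 1) w z).mul_left c).add
    ((hasSum_fst_mul_phi3Term b (c + 1) w z).add (hasSum_snd_mul_phi3Term b (c + 1) w z))
  rw [show c + 1 + 1 = c + 2 by ring, ← add_assoc] at h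
  refine (hasSum_phi3Term b c w z).unique (h.congr_fun fun p => ?_)
  rw [phi3Term_eq_mul]
  ring

end Series

section Coefficients

/-- The summand of index `k` of `Acoef b c z (2 * k + p)`, without the prefactor
`(-1) ^ (b - 1) / (b - 1)!`; indexing by `p = i - 2 * k` avoids truncated subtraction. -/
noncomputable def acoefTerm (β c z : ℝ) (k p : ℕ) : ℝ :=
  (-1) ^ k * (ascPochhammer ℝ (k + p)).eval (β - k - p) *
    (ascPochhammer ℝ p).eval (c - k - p - 1) * z ^ k / (p.factorial * k.factorial)

theorem Acoef_eq_sum_acoefTerm (b : ℕ) (c z : ℝ) (i : ℕ) :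
    Acoef b c z i = (-1) ^ (b - 1) / (b - 1).factorial *
      ∑ k ∈ Finset.range (i / 2 + 1), acoefTerm b c z k (i - 2 * k) := by
  unfold Acoef acoefTerm
  congr 1
  refine Finset.sum_congr rfl fun k hk => ?_
  have hki : 2 * k ≤ i := by rw [Finset.mem_range] at hk; omega
  rw [show k + (i - 2 * k) = i - k by omega]
  push_cast [Nat.cast_sub hki]
  ring_nf

theorem acoefTerm_zero_zero (β c z : ℝ) : acoefTerm β c z 0 0 = 1 := by
  simp [acoefTerm]

theorem acoefTerm_natCast_eq_zero {b k p : ℕ} (hb : 0 < b) (h : b ≤ k + p) (c z : ℝ) :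
    acoefTerm b c z k p = 0 := by
  rw [acoefTerm, show (b : ℝ) - k - p = -((k + p - b : ℕ) : ℝ) by push_cast [Nat.cast_sub h]; ring,
    ascPochhammer_eval_neg_coe_nat_of_lt (by omega)]
  simp

theorem Acoef_eq_zero_of_le {b : ℕ} (hb : 0 < b) (c z : ℝ) {i : ℕ} (hi : 2 * b - 1 ≤ i) :
    Acoef b c z i = 0 := by
  rw [Acoef_eq_sum_acoefTerm, Finset.sum_eq_zero, mul_zero]
  intro k hk
  rw [Finset.mem_range] at hk
  exact acoefTerm_natCast_eq_zero hb (by omega) c z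

-- In these three identities `ring_nf` brings the Pochhammer arguments to a common normal form.
theorem acoefTerm_succ_succ_sub (β c z : ℝ) (k p : ℕ) :
    acoefTerm (β + 1) c z (k + 1) (p + 1) - acoefTerm β c z (k + 1) (p + 1) =
      -z * acoefTerm β (c - 2) z k (p + 1) + (c - 2) * acoefTerm β (c - 1) z (k + 1) p := by
  have h := ascPochhammer_eval_add_one_sub_mul_eval (β - k - p - 2) (c - k - p - 3) k p
  simp only [acoefTerm, show k + 1 + (p + 1) = k + p + 2 by ring,
    show k + (p + 1) = k + p + 1 by ring, show k + 1 + p = k + p + 1 by ring, Nat.factorial_succ]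
  push_cast at h ⊢
  field_simp
  ring_nf at h ⊢
  linear_combination (-1) ^ (k + 1) * z ^ (k + 1) * h

theorem acoefTerm_zero_succ_sub (β c z : ℝ) (p : ℕ) :
    acoefTerm (β + 1) c z 0 (p + 1) - acoefTerm β c z 0 (p + 1) =
      (c - 2) * acoefTerm β (c - 1) z 0 p := by
  have h : ∀ y x : ℝ,
      ((ascPochhammer ℝ (p + 1)).eval (y + 1) - (ascPochhammer ℝ (p + 1)).eval y) *
          (ascPochhammer ℝ (p + 1)).eval x =
        (p + 1) * (x + p) * (ascPochhammer ℝ p).eval (y + 1) * (ascPochhammer ℝ p).eval x :=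
    fun y x => by rw [ascPochhammer_eval_add_one_sub, ascPochhammer_succ_eval p x]; ring
  replace h := h (β - p - 1) (c - p - 2)
  simp only [acoefTerm, zero_add, Nat.factorial_succ]
  push_cast at h ⊢
  field_simp
  ring_nf at h ⊢
  linear_combination h

theorem acoefTerm_succ_zero_sub (β c z : ℝ) (k : ℕ) :
    acoefTerm (β + 1) c z (k + 1) 0 - acoefTerm β c z (k + 1) 0 =
      -z * acoefTerm β (c - 2) z k 0 := by
  have h := ascPochhammer_eval_add_one_sub k (β - k - 1)
  simp only [acoefTerm, add_zero, ascPochhammer_zero, eval_one, Nat.factorial_succ]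
  push_cast at h ⊢
  field_simp
  ring_nf at h ⊢
  linear_combination (-1) ^ (k + 1) * z ^ (k + 1) * h

theorem acoefTerm_succ_sub_of_le (β c z : ℝ) {j k : ℕ} (hk : 2 * k ≤ j) :
    acoefTerm (β + 1) c z (k + 1) (j - 2 * k) - acoefTerm β c z (k + 1) (j - 2 * k) =
      -z * acoefTerm β (c - 2) z k (j - 2 * k) +
        (c - 2) * if 2 * k < j then acoefTerm β (c - 1) z (k + 1) (j - 1 - 2 * k) else 0 := by
  rcases hk.lt_or_eq with hlt | heq
  · rw [if_pos hlt, show j - 2 * k = j - 1 - 2 * k + 1 by omega, acoefTerm_succ_succ_sub]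
  · rw [if_neg heq.not_lt, ← heq, Nat.sub_self, acoefTerm_succ_zero_sub, mul_zero, add_zero]

theorem sum_range_half_add_two {M : Type*} [AddCommMonoid M] (f : ℕ → ℕ → M) (j : ℕ) :
    ∑ k ∈ Finset.range ((j + 2) / 2 + 1), f k (j + 2 - 2 * k) =
      f 0 (j + 2) + ∑ k ∈ Finset.range (j / 2 + 1), f (k + 1) (j - 2 * k) := by
  rw [show (j + 2) / 2 + 1 = j / 2 + 1 + 1 by omega, Finset.sum_range_succ', add_comm]
  congr 1
  refine Finset.sum_congr rfl fun k _ => ?_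
  rw [show j + 2 - 2 * (k + 1) = j - 2 * k by omega]

theorem sum_range_half_add_one {M : Type*} [AddCommMonoid M] (f : ℕ → ℕ → M) (j : ℕ) :
    ∑ k ∈ Finset.range ((j + 1) / 2 + 1), f k (j + 1 - 2 * k) =
      f 0 (j + 1) +
        ∑ k ∈ Finset.range (j / 2 + 1), if 2 * k < j then f (k + 1) (j - 1 - 2 * k) else 0 := by
  rw [Finset.sum_range_succ', add_comm, ← Finset.sum_filter]
  congr 1
  refine Finset.sum_congr (by ext k; simp; omega) fun k _ => ?_
  rw [show j + 1 - 2 * (k + 1) = j - 1 - 2 * k by omega]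

theorem sum_acoefTerm_succ_sub (β c z : ℝ) (j : ℕ) :
    ∑ k ∈ Finset.range ((j + 2) / 2 + 1),
        (acoefTerm (β + 1) c z k (j + 2 - 2 * k) - acoefTerm β c z k (j + 2 - 2 * k)) =
      -z * ∑ k ∈ Finset.range (j / 2 + 1), acoefTerm β (c - 2) z k (j - 2 * k) +
        (c - 2) *
          ∑ k ∈ Finset.range ((j + 1) / 2 + 1), acoefTerm β (c - 1) z k (j + 1 - 2 * k) := by
  rw [sum_range_half_add_two (fun k p => acoefTerm (β + 1) c z k p - acoefTerm β c z k p),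
    sum_range_half_add_one (acoefTerm β (c - 1) z), acoefTerm_zero_succ_sub,
    Finset.sum_congr rfl fun k hk => acoefTerm_succ_sub_of_le β c z
      (show 2 * k ≤ j by rw [Finset.mem_range] at hk; omega),
    Finset.sum_add_distrib, ← Finset.mul_sum, ← Finset.mul_sum]
  ring

theorem natCast_mul_Acoef_succ (n : ℕ) (c z : ℝ) (i : ℕ) :
    (n + 1) * Acoef (n + 2) c z i =
      z * (if 2 ≤ i then Acoef (n + 1) (c - 2) z (i - 2) else 0) -
        (c - 2) * (if 1 ≤ i then Acoef (n + 1) (c - 1) z (i - 1) else 0) -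
          Acoef (n + 1) c z i := by
  have hσ : ((n : ℝ) + 1) * ((-1) ^ (n + 1) / (n + 1).factorial) =
      -((-1) ^ n / n.factorial) := by
    push_cast [Nat.factorial_succ]
    field_simp
    ring
  simp only [Acoef_eq_sum_acoefTerm, Nat.add_sub_cancel, show n + 2 - 1 = n + 1 by omega,
    show ((n + 2 : ℕ) : ℝ) = ((n + 1 : ℕ) : ℝ) + 1 by push_cast; ring]
  rcases i with _ | _ | j
  · simpa [acoefTerm_zero_zero] using hσ
  · have hT := acoefTerm_zero_succ_sub ((n + 1 : ℕ) : ℝ) c z 0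
    simp only [Nat.cast_add, Nat.cast_one, zero_add, Nat.reduceDiv, Finset.range_one,
      Finset.sum_singleton, mul_zero, tsub_zero, Nat.not_ofNat_le_one, ↓reduceIte, le_refl,
      tsub_self, zero_sub] at hT ⊢
    linear_combination hσ * acoefTerm (n + 1 + 1) c z 0 1 - (-1) ^ n / n.factorial * hT
  · have hT := sum_acoefTerm_succ_sub ((n + 1 : ℕ) : ℝ) c z j
    rw [Finset.sum_sub_distrib] at hT
    simp only [show j + 1 + 1 = j + 2 from rfl, show 2 ≤ j + 2 by omega, show 1 ≤ j + 2 by omega,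
      if_true, Nat.add_sub_cancel, show j + 2 - 1 = j + 1 by omega]
    linear_combination hσ * ∑ k ∈ Finset.range ((j + 2) / 2 + 1),
      acoefTerm ((n + 1 : ℕ) + 1) c z k (j + 2 - 2 * k) - (-1) ^ n / n.factorial * hT

end Coefficients

noncomputable def reductionSum (b : ℕ) (c w z : ℝ) (N : ℕ) : ℝ :=
  ∑ i ∈ Finset.range N, (z ^ i)⁻¹ * Acoef b c z i * Phi3 1 (c - i) w z

theorem reductionSum_eq_of_le {b : ℕ} (hb : 0 < b) (c w z : ℝ) {M N : ℕ} (hM : 2 * b - 1 ≤ M)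
    (hN : 2 * b - 1 ≤ N) : reductionSum b c w z M = reductionSum b c w z N := by
  have h (K : ℕ) (hK : 2 * b - 1 ≤ K) :
      reductionSum b c w z K = reductionSum b c w z (2 * b - 1) :=
    Finset.eventually_constant_sum (fun _ hi => by rw [Acoef_eq_zero_of_le hb c z hi]; ring) hK
  rw [h M hM, h N hN]

theorem reductionSum_sub_natCast (b : ℕ) (c w : ℝ) {z : ℝ} (hz : z ≠ 0) (s N : ℕ) :
    reductionSum b (c - s) w z N = z ^ s * ∑ i ∈ Finset.range (N + s),
      (z ^ i)⁻¹ * (if s ≤ i then Acoef b (c - s) z (i - s) else 0) * Phi3 1 (c - i) w z := by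
  rw [add_comm, Finset.sum_range_add, Finset.sum_eq_zero fun i hi => by
    rw [if_neg (by simpa using hi), mul_zero, zero_mul], zero_add, reductionSum, Finset.mul_sum]
  refine Finset.sum_congr rfl fun i _ => ?_
  rw [if_pos (Nat.le_add_right s i), Nat.add_sub_cancel_left, pow_add, mul_inv, sub_sub,
    Nat.cast_add]
  field_simp

theorem reductionSum_recurrence (n : ℕ) (c w : ℝ) {z : ℝ} (hz : z ≠ 0) :
    (n + 1) * z * reductionSum (n + 2) c w z (2 * n + 3) =
      reductionSum (n + 1) (c - 2) w z (2 * n + 1) -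
        (c - 2) * reductionSum (n + 1) (c - 1) w z (2 * n + 1) -
          z * reductionSum (n + 1) c w z (2 * n + 1) := by
  have hpos : 0 < n + 1 := n.succ_pos
  have h2 := reductionSum_sub_natCast (n + 1) c w hz 2 (2 * n + 1)
  have h1 := reductionSum_sub_natCast (n + 1) c w hz 1 (2 * n + 2)
  rw [reductionSum_eq_of_le hpos _ _ _ (by omega)
    (show 2 * (n + 1) - 1 ≤ 2 * n + 1 by omega)] at h1
  push_cast at h1 h2
  rw [h1, h2, reductionSum_eq_of_le hpos c w z (show 2 * (n + 1) - 1 ≤ 2 * n + 1 by omega)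
    (show 2 * (n + 1) - 1 ≤ 2 * n + 3 by omega)]
  simp only [reductionSum, Finset.mul_sum, ← Finset.sum_sub_distrib]
  refine Finset.sum_congr rfl fun i _ => ?_
  linear_combination z * (z ^ i)⁻¹ * Phi3 1 (c - i) w z * natCast_mul_Acoef_succ n c z i

theorem Phi3_natCast_succ_eq_reductionSum {w z : ℝ} (hw : w ≠ 0) (hz : z ≠ 0) (n : ℕ) (c : ℝ) :
    Phi3 ((n + 1 : ℕ) : ℝ) c w z = (z / w) ^ n * reductionSum (n + 1) c w z (2 * n + 1) := by
  induction n generalizing c with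
  | zero => simp [reductionSum, Acoef]
  | succ n ih =>
    have hcontig := Phi3_contiguous ((n + 1 : ℕ) : ℝ) (c - 2) w z
    rw [show c - 2 + 1 = c - 1 by ring, show c - 2 + 2 = c by ring,
      ih (c - 2), ih (c - 1), ih c] at hcontig
    have hrec := reductionSum_recurrence n c w hz
    have hzw : w * (z / w) ^ (n + 1) = z * (z / w) ^ n := by
      rw [pow_succ]
      field_simp
    apply mul_left_cancel₀ (mul_ne_zero n.cast_add_one_ne_zero hw)
    push_cast at hcontig ⊢
    linear_combination -hcontig - (z / w) ^ n * hrec -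
      (n + 1) * reductionSum (n + 2) c w z (2 * n + 3) * hzw

/-- reduction of Φ̃₃ to first-parameter one via the A_i polynomials. -/
theorem phi3_reduction (b : ℕ) (c w z : ℝ) (hb : 0 < b) (hw : w ≠ 0) (hz : z ≠ 0) :
    Phi3 (b : ℝ) c w z =
      (z / w) ^ (b - 1) *
        ∑ i ∈ Finset.range (2 * (b - 1) + 1),
          (z ^ i)⁻¹ * Acoef b c z i * Phi3 1 (c - i) w z := by
  obtain ⟨n, rfl⟩ : ∃ n, b = n + 1 := ⟨b - 1, by omega⟩
  simpa [reductionSum] using Phi3_natCast_succ_eq_reductionSum hw hz n c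
end

section
/- Bivariate Rayleigh CDF: Let a = √(2/(1−ρ)) and b√ = a√ρ for 0 < ρ < 1. Then for r₁, r₂ > 0, F(r₁,r₂) = 1 − e^{−r₂²} − e^{−r₁²} Q₁(r₂ a, r₁ a√ρ) + e^{−r₂²} Q₁(r₂ a√ρ, r₁ a), where F is the joint CDF of two unit-variance correlated Rayleigh random variables with joint density f(r₁,r₂) = (4 r₁ r₂ / (1−ρ)) exp(−(r₁²+r₂²)/(1−ρ)) I₀(2√ρ r₁ r₂/(1−ρ)) on (0,∞)². -/
open scoped BigOperators
open MeasureTheory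

open Real Set Filter MeasureTheory Topology
open scoped Nat

/-!
Write `eₘ(w) = ∑_{j ≤ m} wʲ / j!` and `κ = 1 - ρ`. Expanding `I₀` in its power series turns the
density into `∑ₘ cₘ φₘ(s) φₘ(t)` with `φₘ(x) = x^(2m+1) e^(-x²/κ)`, and the substitution
`w = x²/κ` gives `∫₀ᵀ φₘ = κ^(m+1) m!/2 · (1 - e^(-w) eₘ(w))` at `w = T²/κ`. Hence
`F(r₁, r₂) = κ ∑ₘ ρᵐ (1 - e^(-u) eₘ(u)) (1 - e^(-v) eₘ(v))` with `u = r₁²/κ`, `v = r₂²/κ`.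
The same expansion gives `Q₁(a, b) = e^(-x-y) ∑ₖ xᵏ/k! eₖ(y)` with `x = a²/2`, `y = b²/2`.
Abel summation against the weights `ρᵐ` evaluates the three geometric series, and the double
series left over is, up to its diagonal, the complement in `eˣ eʸ` of the same series with `x`
and `y` exchanged.
-/

noncomputable def expPartialSum (m : ℕ) (x : ℝ) : ℝ :=
  ∑ j ∈ Finset.range (m + 1), x ^ j / j !

noncomputable def marcumSeries (x y : ℝ) : ℝ :=
  ∑' m : ℕ, x ^ m / m ! * expPartialSum m y

@[simp] lemma expPartialSum_zero_left (x : ℝ) : expPartialSum 0 x = 1 := by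
  simp [expPartialSum]

@[simp] lemma expPartialSum_zero_right (m : ℕ) : expPartialSum m 0 = 1 := by
  simp [expPartialSum, Finset.sum_range_succ']

lemma expPartialSum_succ (m : ℕ) (x : ℝ) :
    expPartialSum (m + 1) x = expPartialSum m x + x ^ (m + 1) / (m + 1)! :=
  Finset.sum_range_succ _ _

lemma expPartialSum_nonneg {x : ℝ} (hx : 0 ≤ x) (m : ℕ) : 0 ≤ expPartialSum m x :=
  Finset.sum_nonneg fun _ _ => by positivity

lemma expPartialSum_le_exp {x : ℝ} (hx : 0 ≤ x) (m : ℕ) : expPartialSum m x ≤ exp x :=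
  sum_le_exp_of_nonneg hx _

lemma hasSum_pow_div_factorial (x : ℝ) : HasSum (fun n : ℕ => x ^ n / n !) (exp x) := by
  simpa [← exp_eq_exp_ℝ] using NormedSpace.expSeries_div_hasSum_exp (𝔸 := ℝ) x

section MarcumSeries

variable (x y : ℝ)

lemma summable_pow_div_factorial_mul_pow_div_factorial :
    Summable fun p : ℕ × ℕ => x ^ p.1 / p.1 ! * (y ^ p.2 / p.2 !) :=
  summable_mul_of_summable_norm (Real.summable_pow_div_factorial x).norm
    (Real.summable_pow_div_factorial y).norm

lemma tsum_indicator_le_pow_div_factorial_mul (m : ℕ) :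
    ∑' j : ℕ, {p : ℕ × ℕ | p.2 ≤ p.1}.indicator
        (fun p => x ^ p.1 / p.1 ! * (y ^ p.2 / p.2 !)) (m, j) =
      x ^ m / m ! * expPartialSum m y := by
  rw [tsum_eq_sum (s := Finset.range (m + 1)), expPartialSum, Finset.mul_sum]
  · refine Finset.sum_congr rfl fun j hj => ?_
    rw [Set.indicator_of_mem (by simpa [Nat.lt_succ_iff] using hj)]
  · intro j hj
    exact Set.indicator_of_notMem (by simpa [Nat.lt_succ_iff] using hj) _

lemma summable_pow_div_factorial_mul_expPartialSum :
    Summable fun m : ℕ => x ^ m / m ! * expPartialSum m y :=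
  ((summable_pow_div_factorial_mul_pow_div_factorial x y).indicator _).prod.congr
    (tsum_indicator_le_pow_div_factorial_mul x y)

lemma marcumSeries_eq_tsum_indicator :
    marcumSeries x y = ∑' p : ℕ × ℕ, {p : ℕ × ℕ | p.2 ≤ p.1}.indicator
        (fun p => x ^ p.1 / p.1 ! * (y ^ p.2 / p.2 !)) p := by
  have hs := (summable_pow_div_factorial_mul_pow_div_factorial x y).indicator
    {p : ℕ × ℕ | p.2 ≤ p.1}
  rw [hs.tsum_prod' fun m => hs.prod_factor m, marcumSeries]
  exact tsum_congr fun m => (tsum_indicator_le_pow_div_factorial_mul x y m).symm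

/-- The lower and upper triangles of the Cauchy product `exp x * exp y` overlap in the diagonal. -/
theorem marcumSeries_add_marcumSeries_swap :
    marcumSeries x y + marcumSeries y x =
      exp (x + y) + ∑' m : ℕ, (x * y) ^ m / (m ! * m !) := by
  set F : ℕ × ℕ → ℝ := fun p => x ^ p.1 / p.1 ! * (y ^ p.2 / p.2 !)
  have hF : Summable F := summable_pow_div_factorial_mul_pow_div_factorial x y
  have hfull : ∑' p, F p = exp (x + y) := by
    rw [exp_add, ← (hasSum_pow_div_factorial x).tsum_eq, ← (hasSum_pow_div_factorial y).tsum_eq,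
      tsum_mul_tsum_of_summable_norm (Real.summable_pow_div_factorial x).norm
        (Real.summable_pow_div_factorial y).norm]
  have hupper : marcumSeries y x = ∑' p, {p : ℕ × ℕ | p.1 ≤ p.2}.indicator F p := by
    rw [marcumSeries_eq_tsum_indicator, ← (Equiv.prodComm ℕ ℕ).tsum_eq]
    refine tsum_congr fun p => ?_
    simp only [Set.indicator_apply, Set.mem_ofPred_eq, Equiv.prodComm_apply, Prod.fst_swap,
      Prod.snd_swap, F, mul_comm]
  have hdiag : ∑' m : ℕ, (x * y) ^ m / (m ! * m !) =
      ∑' p, {p : ℕ × ℕ | p.1 = p.2}.indicator F p := by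
    have hs := hF.indicator {p : ℕ × ℕ | p.1 = p.2}
    rw [hs.tsum_prod' fun m => hs.prod_factor m]
    refine tsum_congr fun m => ?_
    rw [tsum_eq_single m fun j (hj : j ≠ m) => Set.indicator_of_notMem
      (s := {p : ℕ × ℕ | p.1 = p.2}) (Ne.symm hj) F,
      Set.indicator_of_mem (s := {p : ℕ × ℕ | p.1 = p.2}) rfl, mul_pow]
    ring
  rw [marcumSeries_eq_tsum_indicator, hupper, hdiag, ← hfull,
    ← (hF.indicator _).tsum_add (hF.indicator _), ← hF.tsum_add (hF.indicator _)]
  refine tsum_congr fun p => ?_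
  simp only [Set.indicator_apply, Set.mem_ofPred_eq]
  rcases lt_trichotomy p.1 p.2 with h | h | h
  · simp [h.le, h.ne, h.not_ge]
  · simp [h]
  · simp [h.le, h.ne', h.not_ge]

end MarcumSeries

lemma summable_pow_div_factorial_mul_factorial (z : ℝ) :
    Summable fun m : ℕ => z ^ m / (m ! * m !) := by
  refine (Real.summable_pow_div_factorial |z|).of_norm_bounded fun m => ?_
  rw [norm_div, norm_pow, Real.norm_eq_abs, Real.norm_of_nonneg (by positivity)]
  gcongr
  exact le_mul_of_one_le_left (by positivity) (by exact_mod_cast m.factorial_pos)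

/-- `ℙ(N > m)` for `N` Poisson of mean `x`, i.e. the regularized incomplete gamma `P(m + 1, x)`. -/
noncomputable def poissonTail (m : ℕ) (x : ℝ) : ℝ := 1 - exp (-x) * expPartialSum m x

lemma poissonTail_nonneg {x : ℝ} (hx : 0 ≤ x) (m : ℕ) : 0 ≤ poissonTail m x := by
  have h := mul_le_mul_of_nonneg_left (expPartialSum_le_exp hx m) (exp_nonneg (-x))
  rw [← exp_add, neg_add_cancel, exp_zero] at h
  exact sub_nonneg.mpr h

lemma poissonTail_le_one {x : ℝ} (hx : 0 ≤ x) (m : ℕ) : poissonTail m x ≤ 1 :=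
  sub_le_self _ (mul_nonneg (exp_nonneg _) (expPartialSum_nonneg hx m))

section Geometric

variable {ρ : ℝ} (hρ0 : 0 ≤ ρ) (hρ1 : ρ < 1)
include hρ0 hρ1

lemma summable_geometric_mul_of_le {c : ℕ → ℝ} {C : ℝ} (hc : ∀ m, 0 ≤ c m) (hC : ∀ m, c m ≤ C) :
    Summable fun m : ℕ => ρ ^ m * c m :=
  ((summable_geometric_of_lt_one hρ0 hρ1).mul_right C).of_nonneg_of_le
    (fun m => mul_nonneg (pow_nonneg hρ0 m) (hc m))
    (fun m => mul_le_mul_of_nonneg_left (hC m) (pow_nonneg hρ0 m))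

omit hρ0 hρ1 in
lemma hasSum_one_sub_mul_geometric_mul {c d : ℕ → ℝ} {V : ℝ}
    (hc : Summable fun m : ℕ => ρ ^ m * c m) (hd0 : d 0 = c 0)
    (hd : ∀ m, d (m + 1) = c (m + 1) - c m) (hV : HasSum (fun m : ℕ => ρ ^ m * d m) V) :
    HasSum (fun m : ℕ => (1 - ρ) * ρ ^ m * c m) V := by
  set A := ∑' m : ℕ, ρ ^ m * c m
  have hshift : HasSum (fun m : ℕ => ρ ^ (m + 1) * c (m + 1)) (A - c 0) := by
    simpa using (hasSum_nat_add_iff' 1).mpr hc.hasSum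
  have hdsucc : HasSum (fun m : ℕ => ρ ^ (m + 1) * d (m + 1)) ((1 - ρ) * A - d 0) := by
    have h := hshift.sub (hc.hasSum.mul_left ρ)
    rw [show A - c 0 - ρ * A = (1 - ρ) * A - d 0 by rw [hd0]; ring] at h
    exact h.congr_fun fun m => by rw [hd]; ring
  have hd : HasSum (fun m : ℕ => ρ ^ m * d m) ((1 - ρ) * A) :=
    (hasSum_nat_add_iff' 1).mp (by simpa using hdsucc)
  rw [hV.unique hd]
  simpa only [mul_assoc] using hc.hasSum.mul_left (1 - ρ)

lemma hasSum_one_sub_mul_geometric : HasSum (fun m : ℕ => (1 - ρ) * ρ ^ m) 1 := by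
  have h := (hasSum_geometric_of_lt_one hρ0 hρ1).mul_left (1 - ρ)
  rwa [mul_inv_cancel₀ (sub_pos.mpr hρ1).ne'] at h

lemma hasSum_one_sub_mul_geometric_mul_expPartialSum {u : ℝ} (hu : 0 ≤ u) :
    HasSum (fun m : ℕ => (1 - ρ) * ρ ^ m * expPartialSum m u) (exp (ρ * u)) := by
  refine hasSum_one_sub_mul_geometric_mul (d := fun m => u ^ m / m !)
    (summable_geometric_mul_of_le hρ0 hρ1 (expPartialSum_nonneg hu) (expPartialSum_le_exp hu))
    (by simp) (fun m => by simp [expPartialSum_succ]) ?_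
  simpa [mul_pow, mul_div_assoc] using hasSum_pow_div_factorial (ρ * u)

lemma hasSum_one_sub_mul_geometric_mul_expPartialSum_mul {u v : ℝ} (hu : 0 ≤ u) (hv : 0 ≤ v) :
    HasSum (fun m : ℕ => (1 - ρ) * ρ ^ m * (expPartialSum m u * expPartialSum m v))
      (marcumSeries (ρ * u) v + marcumSeries (ρ * v) u -
        ∑' m : ℕ, (ρ * u * v) ^ m / (m ! * m !)) := by
  refine hasSum_one_sub_mul_geometric_mul
    (d := fun m => u ^ m / m ! * expPartialSum m v + v ^ m / m ! * expPartialSum m u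
      - u ^ m * v ^ m / (m ! * m !))
    (summable_geometric_mul_of_le hρ0 hρ1
      (fun m => mul_nonneg (expPartialSum_nonneg hu m) (expPartialSum_nonneg hv m))
      (fun m => mul_le_mul (expPartialSum_le_exp hu m) (expPartialSum_le_exp hv m)
        (expPartialSum_nonneg hv m) (exp_nonneg u)))
    (by simp) (fun m => ?_) ?_
  · simp only [expPartialSum_succ]
    field_simp
    ring
  · refine (((summable_pow_div_factorial_mul_expPartialSum (ρ * u) v).hasSum.add
      (summable_pow_div_factorial_mul_expPartialSum (ρ * v) u).hasSum).sub
      (summable_pow_div_factorial_mul_factorial (ρ * u * v)).hasSum).congr_fun fun m => ?_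
    simp only [mul_pow]
    ring

end Geometric

theorem hasSum_one_sub_mul_geometric_mul_poissonTail_mul {ρ u v : ℝ} (hρ0 : 0 ≤ ρ) (hρ1 : ρ < 1)
    (hu : 0 ≤ u) (hv : 0 ≤ v) :
    HasSum (fun m : ℕ => (1 - ρ) * ρ ^ m * (poissonTail m u * poissonTail m v))
      (1 - exp (-((1 - ρ) * v)) - exp (-(u + v)) * marcumSeries v (ρ * u) +
        exp (-(u + v)) * marcumSeries (ρ * v) u) := by
  have hsum := (((hasSum_one_sub_mul_geometric hρ0 hρ1).sub
    ((hasSum_one_sub_mul_geometric_mul_expPartialSum hρ0 hρ1 hu).mul_left (exp (-u)))).sub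
    ((hasSum_one_sub_mul_geometric_mul_expPartialSum hρ0 hρ1 hv).mul_left (exp (-v)))).add
    ((hasSum_one_sub_mul_geometric_mul_expPartialSum_mul hρ0 hρ1 hu hv).mul_left
      (exp (-u) * exp (-v)))
  have hval : 1 - exp (-((1 - ρ) * v)) - exp (-(u + v)) * marcumSeries v (ρ * u) +
      exp (-(u + v)) * marcumSeries (ρ * v) u =
    1 - exp (-u) * exp (ρ * u) - exp (-v) * exp (ρ * v) + exp (-u) * exp (-v) *
      (marcumSeries (ρ * u) v + marcumSeries (ρ * v) u -
        ∑' m : ℕ, (ρ * u * v) ^ m / (m ! * m !)) := by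
    have hswap := marcumSeries_add_marcumSeries_swap (ρ * u) v
    have e1 : exp (-((1 - ρ) * v)) = exp (-v) * exp (ρ * v) := by rw [← exp_add]; ring_nf
    have e2 : exp (-(u + v)) = exp (-u) * exp (-v) := by rw [← exp_add]; ring_nf
    have e3 : exp (-u) * exp (-v) * exp (ρ * u + v) = exp (-u) * exp (ρ * u) := by
      rw [← exp_add, ← exp_add, ← exp_add]; ring_nf
    rw [e1, e2]
    linear_combination -e3 - exp (-u) * exp (-v) * hswap
  rw [hval]
  exact hsum.congr_fun fun m => by simp only [poissonTail]; ring

section GaussianMoments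

lemma hasDerivAt_expPartialSum (m : ℕ) (x : ℝ) :
    HasDerivAt (expPartialSum m) (expPartialSum m x - x ^ m / m !) x := by
  induction m with
  | zero =>
    rw [funext expPartialSum_zero_left]
    simpa using hasDerivAt_const x (1 : ℝ)
  | succ m ih =>
    have hpow : HasDerivAt (fun x : ℝ => x ^ (m + 1) / (m + 1)!) (x ^ m / m !) x :=
      ((hasDerivAt_pow (m + 1) x).div_const _).congr_deriv (by
        rw [Nat.factorial_succ]; push_cast; field_simp)
    rw [funext (expPartialSum_succ m)]
    exact (ih.add hpow).congr_deriv (by dsimp only; ring)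

lemma hasDerivAt_exp_neg_mul_expPartialSum (m : ℕ) (x : ℝ) :
    HasDerivAt (fun x => exp (-x) * expPartialSum m x) (-(exp (-x) * (x ^ m / m !))) x :=
  ((hasDerivAt_neg x).exp.mul (hasDerivAt_expPartialSum m x)).congr_deriv (by ring)

lemma tendsto_exp_neg_mul_expPartialSum_atTop (m : ℕ) :
    Tendsto (fun x => exp (-x) * expPartialSum m x) atTop (𝓝 0) := by
  have h : ∀ j ∈ Finset.range (m + 1),
      Tendsto (fun x => exp (-x) * (x ^ j / j !)) atTop (𝓝 0) := fun j _ => by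
    have h := (tendsto_pow_mul_exp_neg_atTop_nhds_zero j).div_const (j ! : ℝ)
    rw [zero_div] at h
    exact h.congr fun x => by ring
  simpa [expPartialSum, Finset.mul_sum] using tendsto_finsetSum _ h

variable {κ : ℝ}

/-- The substitution `w = x² / κ` turns the moment into an incomplete gamma integral. -/
lemma hasDerivAt_gaussianMoment_primitive (hκ : κ ≠ 0) (m : ℕ) (x : ℝ) :
    HasDerivAt
      (fun x => -(κ ^ (m + 1) * m ! / 2) * (exp (-(x ^ 2 / κ)) * expPartialSum m (x ^ 2 / κ)))
      (x ^ (2 * m + 1) * exp (-(x ^ 2 / κ))) x := by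
  have hsq : HasDerivAt (fun x : ℝ => x ^ 2 / κ) (2 * x / κ) x := by
    simpa using (hasDerivAt_pow 2 x).div_const κ
  refine (((hasDerivAt_exp_neg_mul_expPartialSum m (x ^ 2 / κ)).comp x hsq).const_mul
    (-(κ ^ (m + 1) * m ! / 2))).congr_deriv ?_
  rw [div_pow, ← pow_mul, pow_succ]
  field_simp
  ring

lemma integral_Ioo_pow_mul_exp_neg_sq_div (hκ : 0 < κ) (m : ℕ) {T : ℝ} (hT : 0 ≤ T) :
    ∫ x in Ioo 0 T, x ^ (2 * m + 1) * exp (-(x ^ 2 / κ)) =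
      κ ^ (m + 1) * m ! / 2 * poissonTail m (T ^ 2 / κ) := by
  have hcont : Continuous fun x : ℝ => x ^ (2 * m + 1) * exp (-(x ^ 2 / κ)) := by fun_prop
  rw [← integral_Ioc_eq_integral_Ioo, ← intervalIntegral.integral_of_le hT,
    intervalIntegral.integral_eq_sub_of_hasDerivAt
      (fun x _ => hasDerivAt_gaussianMoment_primitive hκ.ne' m x) (hcont.intervalIntegrable 0 T)]
  simp only [poissonTail, ne_eq, OfNat.ofNat_ne_zero, not_false_eq_true, zero_pow, zero_div,
    neg_zero, exp_zero, expPartialSum_zero_right]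
  ring

lemma tendsto_gaussianMoment_primitive_atTop (hκ : 0 < κ) (m : ℕ) :
    Tendsto (fun x => -(κ ^ (m + 1) * m ! / 2) * (exp (-(x ^ 2 / κ)) * expPartialSum m (x ^ 2 / κ)))
      atTop (𝓝 0) := by
  simpa using ((tendsto_exp_neg_mul_expPartialSum_atTop m).comp
    ((tendsto_pow_atTop two_ne_zero).atTop_div_const hκ)).const_mul (-(κ ^ (m + 1) * m ! / 2))

lemma integrableOn_Ioi_pow_mul_exp_neg_sq_div (hκ : 0 < κ) (m : ℕ) {b : ℝ} (hb : 0 ≤ b) :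
    IntegrableOn (fun x => x ^ (2 * m + 1) * exp (-(x ^ 2 / κ))) (Ioi b) :=
  integrableOn_Ioi_deriv_of_nonneg
    (hasDerivAt_gaussianMoment_primitive hκ.ne' m b).continuousAt.continuousWithinAt
    (fun x _ => hasDerivAt_gaussianMoment_primitive hκ.ne' m x)
    (fun x hx => by have := hb.trans_lt hx; positivity)
    (tendsto_gaussianMoment_primitive_atTop hκ m)

lemma integral_Ioi_pow_mul_exp_neg_sq_div (hκ : 0 < κ) (m : ℕ) {b : ℝ} (hb : 0 ≤ b) :
    ∫ x in Ioi b, x ^ (2 * m + 1) * exp (-(x ^ 2 / κ)) =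
      κ ^ (m + 1) * m ! / 2 * (exp (-(b ^ 2 / κ)) * expPartialSum m (b ^ 2 / κ)) := by
  rw [integral_Ioi_of_hasDerivAt_of_nonneg
    (hasDerivAt_gaussianMoment_primitive hκ.ne' m b).continuousAt.continuousWithinAt
    (fun x _ => hasDerivAt_gaussianMoment_primitive hκ.ne' m x)
    (fun x hx => by have := hb.trans_lt hx; positivity)
    (tendsto_gaussianMoment_primitive_atTop hκ m)]
  ring

end GaussianMoments

section SeriesIntegrals

variable {α β : Type*} [MeasurableSpace α] [MeasurableSpace β] {μ : Measure α} {ν : Measure β}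

lemma integral_tsum_of_nonneg {f : ℕ → α → ℝ} (hf : ∀ m, Integrable (f m) μ)
    (hnn : ∀ m, 0 ≤ᵐ[μ] f m) (hsum : Summable fun m => ∫ x, f m x ∂μ) :
    ∫ x, ∑' m, f m x ∂μ = ∑' m, ∫ x, f m x ∂μ :=
  (integral_tsum_of_summable_integral_norm hf (hsum.congr fun m => integral_congr_ae
    ((hnn m).mono fun _ hx => (Real.norm_of_nonneg hx).symm))).symm

lemma integral_integral_tsum_mul_of_nonneg {c : ℕ → ℝ} {f : ℕ → α → ℝ} {g : ℕ → β → ℝ}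
    (hc : ∀ m, 0 ≤ c m) (hf : ∀ m, 0 ≤ᵐ[μ] f m) (hg : ∀ m, 0 ≤ᵐ[ν] g m)
    (hfi : ∀ m, Integrable (f m) μ) (hgi : ∀ m, Integrable (g m) ν)
    (hinner : ∀ᵐ s ∂μ, Summable fun m => c m * f m s * ∫ t, g m t ∂ν)
    (houter : Summable fun m => c m * (∫ s, f m s ∂μ) * ∫ t, g m t ∂ν) :
    ∫ s, ∫ t, ∑' m, c m * f m s * g m t ∂ν ∂μ =
      ∑' m, c m * (∫ s, f m s ∂μ) * ∫ t, g m t ∂ν := by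
  have hinner_eq : ∀ᵐ s ∂μ,
      ∫ t, ∑' m, c m * f m s * g m t ∂ν = ∑' m, c m * f m s * ∫ t, g m t ∂ν := by
    filter_upwards [ae_all_iff.mpr hf, hinner] with s hfs hs
    rw [integral_tsum_of_nonneg (fun m => (hgi m).const_mul _)
      (fun m => (hg m).mono fun t ht => mul_nonneg (mul_nonneg (hc m) (hfs m)) ht)]
    · simp only [integral_const_mul]
    · simpa only [integral_const_mul] using hs
  rw [integral_congr_ae hinner_eq, integral_tsum_of_nonneg
    (fun m => ((hfi m).const_mul _).mul_const _)
    (fun m => (hf m).mono fun s hs => mul_nonneg (mul_nonneg (hc m) hs)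
      (integral_nonneg_of_ae (hg m)))]
  · simp only [integral_mul_const, integral_const_mul]
  · simpa only [integral_mul_const, integral_const_mul] using houter

end SeriesIntegrals

lemma besselI_zero (x : ℝ) : besselI 0 x = ∑' m : ℕ, (x ^ 2 / 4) ^ m / (m ! * m !) := by
  simp only [besselI, Int.natAbs_zero, add_zero]
  refine tsum_congr fun m => ?_
  rw [pow_mul]
  ring

theorem marcumQ_one_eq (a : ℝ) {b : ℝ} (hb : 0 ≤ b) :
    marcumQ 1 a b = exp (-(a ^ 2 / 2 + b ^ 2 / 2)) * marcumSeries (a ^ 2 / 2) (b ^ 2 / 2) := by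
  set c : ℕ → ℝ := fun m => exp (-(a ^ 2 / 2)) * ((a ^ 2 / 4) ^ m / (m ! * m !))
  have hseries : ∀ x, x ^ (1 : ℤ) / a ^ ((1 : ℤ) - 1) * exp (-(a ^ 2 + x ^ 2) / 2) *
      besselI (1 - 1) (a * x) = ∑' m : ℕ, c m * (x ^ (2 * m + 1) * exp (-(x ^ 2 / 2))) := by
    intro x
    rw [sub_self, besselI_zero, ← tsum_mul_left]
    refine tsum_congr fun m => ?_
    rw [show -(a ^ 2 + x ^ 2) / 2 = -(a ^ 2 / 2) + -(x ^ 2 / 2) by ring, exp_add]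
    simp only [c, zpow_one, zpow_zero, div_one]
    ring
  have hterm : ∀ m : ℕ, ∫ x in Ioi b, c m * (x ^ (2 * m + 1) * exp (-(x ^ 2 / 2))) =
      exp (-(a ^ 2 / 2 + b ^ 2 / 2)) * ((a ^ 2 / 2) ^ m / m ! * expPartialSum m (b ^ 2 / 2)) := by
    intro m
    rw [integral_const_mul, integral_Ioi_pow_mul_exp_neg_sq_div two_pos m hb, neg_add, exp_add,
      show (a ^ 2 / 2) ^ m = (a ^ 2 / 4) ^ m * 2 ^ m by rw [← mul_pow]; ring_nf]
    simp only [c]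
    field_simp
    ring
  rw [marcumQ, integral_congr_ae (Eventually.of_forall hseries), integral_tsum_of_nonneg
    (fun m => (integrableOn_Ioi_pow_mul_exp_neg_sq_div two_pos m hb).const_mul (c m))
    (fun m => ae_restrict_of_forall_mem measurableSet_Ioi fun x hx => by
      have := hb.trans_lt hx; positivity)]
  · rw [tsum_congr hterm, tsum_mul_left, marcumSeries]
  · simpa only [hterm] using
      (summable_pow_div_factorial_mul_expPartialSum (a ^ 2 / 2) (b ^ 2 / 2)).mul_left _

lemma rayleigh_density_eq_tsum {ρ : ℝ} (hρ0 : 0 ≤ ρ) (s t : ℝ) :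
    4 * s * t / (1 - ρ) * exp (-(s ^ 2 + t ^ 2) / (1 - ρ)) * besselI 0 (2 * √ρ * s * t / (1 - ρ)) =
      ∑' m : ℕ, 4 * ρ ^ m / ((1 - ρ) ^ (2 * m + 1) * (m ! * m !)) *
        (s ^ (2 * m + 1) * exp (-(s ^ 2 / (1 - ρ)))) *
        (t ^ (2 * m + 1) * exp (-(t ^ 2 / (1 - ρ)))) := by
  rw [besselI_zero, ← tsum_mul_left]
  refine tsum_congr fun m => ?_
  rw [show (2 * √ρ * s * t / (1 - ρ)) ^ 2 / 4 = ρ * s ^ 2 * t ^ 2 / (1 - ρ) ^ 2 by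
      rw [div_pow, mul_pow, mul_pow, mul_pow, sq_sqrt hρ0]; ring,
    show -(s ^ 2 + t ^ 2) / (1 - ρ) = -(s ^ 2 / (1 - ρ)) + -(t ^ 2 / (1 - ρ)) by ring, exp_add]
  generalize 1 - ρ = κ
  ring

lemma summable_rayleigh_inner_series {ρ s T : ℝ} (hρ0 : 0 ≤ ρ) (hρ1 : ρ < 1) (hs : 0 ≤ s)
    (hT : 0 ≤ T) :
    Summable fun m : ℕ => 4 * ρ ^ m / ((1 - ρ) ^ (2 * m + 1) * (m ! * m !)) *
      (s ^ (2 * m + 1) * exp (-(s ^ 2 / (1 - ρ)))) *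
      ∫ t in Ioo 0 T, t ^ (2 * m + 1) * exp (-(t ^ 2 / (1 - ρ))) := by
  have hκ : 0 < 1 - ρ := sub_pos.mpr hρ1
  have hterm : ∀ m : ℕ, 4 * ρ ^ m / ((1 - ρ) ^ (2 * m + 1) * (m ! * m !)) *
      (s ^ (2 * m + 1) * exp (-(s ^ 2 / (1 - ρ)))) *
      ∫ t in Ioo 0 T, t ^ (2 * m + 1) * exp (-(t ^ 2 / (1 - ρ))) =
      2 * s * exp (-(s ^ 2 / (1 - ρ))) * ((ρ * s ^ 2 / (1 - ρ)) ^ m / m !) *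
        poissonTail m (T ^ 2 / (1 - ρ)) := fun m => by
    rw [integral_Ioo_pow_mul_exp_neg_sq_div hκ m hT, div_pow, mul_pow, ← pow_mul]
    field_simp
    ring
  refine (((Real.summable_pow_div_factorial _).mul_left
    (2 * s * exp (-(s ^ 2 / (1 - ρ))))).of_nonneg_of_le
    (fun m => mul_nonneg (by positivity) (poissonTail_nonneg (by positivity) m))
    (fun m => mul_le_of_le_one_right (by positivity) (poissonTail_le_one (by positivity) m))).congr
    fun m => (hterm m).symm

theorem integral_integral_rayleigh_density {ρ r₁ r₂ : ℝ} (hρ0 : 0 ≤ ρ) (hρ1 : ρ < 1)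
    (h1 : 0 ≤ r₁) (h2 : 0 ≤ r₂) :
    ∫ s in Ioo 0 r₁, ∫ t in Ioo 0 r₂, 4 * s * t / (1 - ρ) * exp (-(s ^ 2 + t ^ 2) / (1 - ρ)) *
        besselI 0 (2 * √ρ * s * t / (1 - ρ)) =
      ∑' m : ℕ, (1 - ρ) * ρ ^ m *
        (poissonTail m (r₁ ^ 2 / (1 - ρ)) * poissonTail m (r₂ ^ 2 / (1 - ρ))) := by
  have hκ : 0 < 1 - ρ := sub_pos.mpr hρ1
  set c : ℕ → ℝ := fun m => 4 * ρ ^ m / ((1 - ρ) ^ (2 * m + 1) * (m ! * m !))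
  set f : ℕ → ℝ → ℝ := fun m x => x ^ (2 * m + 1) * exp (-(x ^ 2 / (1 - ρ)))
  have hf_nonneg : ∀ m T, 0 ≤ᵐ[volume.restrict (Ioo 0 T)] f m := fun m T =>
    ae_restrict_of_forall_mem measurableSet_Ioo fun x hx => by have := hx.1; positivity
  have hf_int : ∀ m T, Integrable (f m) (volume.restrict (Ioo 0 T)) := fun m T =>
    ((by fun_prop : Continuous (f m)).integrableOn_Icc).mono_set Ioo_subset_Icc_self
  have houter_term : ∀ m, c m * (∫ s in Ioo 0 r₁, f m s) * ∫ t in Ioo 0 r₂, f m t =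
      (1 - ρ) * ρ ^ m * (poissonTail m (r₁ ^ 2 / (1 - ρ)) * poissonTail m (r₂ ^ 2 / (1 - ρ))) :=
    fun m => by
    rw [integral_Ioo_pow_mul_exp_neg_sq_div hκ m h1, integral_Ioo_pow_mul_exp_neg_sq_div hκ m h2]
    simp only [c]
    field_simp
    ring
  have hinner : ∀ᵐ s ∂(volume.restrict (Ioo 0 r₁)),
      Summable fun m => c m * f m s * ∫ t in Ioo 0 r₂, f m t :=
    ae_restrict_of_forall_mem measurableSet_Ioo fun s hs =>
      summable_rayleigh_inner_series hρ0 hρ1 hs.1.le h2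
  have houter : Summable fun m => c m * (∫ s in Ioo 0 r₁, f m s) * ∫ t in Ioo 0 r₂, f m t :=
    ((hasSum_one_sub_mul_geometric_mul_poissonTail_mul hρ0 hρ1 (by positivity)
      (by positivity)).summable).congr fun m => (houter_term m).symm
  calc _ = ∫ s in Ioo 0 r₁, ∫ t in Ioo 0 r₂, ∑' m, c m * f m s * f m t := by
        simp_rw [rayleigh_density_eq_tsum hρ0]; rfl
    _ = _ := by
        rw [integral_integral_tsum_mul_of_nonneg (fun m => by positivity) (hf_nonneg · r₁)
          (hf_nonneg · r₂) (hf_int · r₁) (hf_int · r₂) hinner houter]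
        exact tsum_congr houter_term

/-- bivariate Rayleigh CDF in terms of first-order Marcum-Q functions. -/
theorem bivariate_rayleigh_cdf (ρ r₁ r₂ : ℝ) (hρ : 0 < ρ) (hρ1 : ρ < 1)
    (h1 : 0 < r₁) (h2 : 0 < r₂) :
    (∫ s in Set.Ioo (0 : ℝ) r₁, ∫ t in Set.Ioo (0 : ℝ) r₂,
        4 * s * t / (1 - ρ) * Real.exp (-(s ^ 2 + t ^ 2) / (1 - ρ)) *
          besselI 0 (2 * Real.sqrt ρ * s * t / (1 - ρ))) =
      1 - Real.exp (-r₂ ^ 2) -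
        Real.exp (-r₁ ^ 2) *
          marcumQ 1 (r₂ * Real.sqrt (2 / (1 - ρ)))
            (r₁ * Real.sqrt (2 / (1 - ρ)) * Real.sqrt ρ) +
        Real.exp (-r₂ ^ 2) *
          marcumQ 1 (r₂ * Real.sqrt (2 / (1 - ρ)) * Real.sqrt ρ)
            (r₁ * Real.sqrt (2 / (1 - ρ))) := by
  have hκ : 0 < 1 - ρ := sub_pos.mpr hρ1
  have hhalf : ∀ r : ℝ, (r * √(2 / (1 - ρ))) ^ 2 / 2 = r ^ 2 / (1 - ρ) := fun r => by
    rw [mul_pow, sq_sqrt (by positivity)]; ring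
  have hhalf_ρ : ∀ r : ℝ, (r * √(2 / (1 - ρ)) * √ρ) ^ 2 / 2 = ρ * (r ^ 2 / (1 - ρ)) := fun r => by
    rw [mul_pow, sq_sqrt hρ.le, mul_comm _ ρ, mul_div_assoc, hhalf]
  set u := r₁ ^ 2 / (1 - ρ)
  set v := r₂ ^ 2 / (1 - ρ)
  have e₂ : exp (-r₂ ^ 2) = exp (-((1 - ρ) * v)) := by congr 1; simp only [v]; field_simp
  have e₁ : exp (-r₁ ^ 2) * exp (-(v + ρ * u)) = exp (-(u + v)) := by
    rw [← exp_add]; congr 1; simp only [u, v]; field_simp; ring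
  have e₃ : exp (-r₂ ^ 2) * exp (-(ρ * v + u)) = exp (-(u + v)) := by
    rw [← exp_add]; congr 1; simp only [u, v]; field_simp; ring
  rw [integral_integral_rayleigh_density hρ.le hρ1 h1.le h2.le,
    marcumQ_one_eq _ (by positivity : 0 ≤ r₁ * √(2 / (1 - ρ)) * √ρ),
    marcumQ_one_eq _ (by positivity : 0 ≤ r₁ * √(2 / (1 - ρ))), hhalf, hhalf, hhalf_ρ, hhalf_ρ,
    (hasSum_one_sub_mul_geometric_mul_poissonTail_mul hρ.le hρ1 (by positivity)
      (by positivity)).tsum_eq, ← mul_assoc, ← mul_assoc, e₁, e₃, e₂]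
end
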